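/- arXiv:1611.05219 — 2 statements merged into one kernel-verified Lean document; each statement's English description precedes it below -/
import Mathlib

section
/- Let X be a finite set, P a stochastic matrix on X (entries ≥ 0, rows summing to 1) with a single recurrent class, and π an invariant distribution of P. Let Y be a finite set with |Y| > 1 and g : X → Y any map. For n ≥ 1 define p_n on Y^n by p_n(y_1,…,y_n) = Σ_{x_1 ∈ g^{-1}(y_1), …, x_n ∈ g^{-1}(y_n)} π(x_1) ∏_{ℓ=2}^{n} P(x_{ℓ-1}, x_ℓ). Fix k ≥ 1, let Q(w,z) = p_{k+1}(w,z)/p_k(w) if p_k(w) > 0 and Q(w,z) = 1/|Y| otherwise, and let P_Q be the Doob lift of Q on Y^k. Then the stochastic matrix P_Q has a single recurrent class, namely S = {w ∈ Y^k : p_k(w) > 0}: every state of S is recurrent, all states of S communicate, and every state of Y^k \ S is transient. -/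
open Finset
open scoped Classical

noncomputable section

/-- The first `k` coordinates of a length-`k+1` tuple. -/
def front {Z : Type*} {k : ℕ} (v : Fin (k + 1) → Z) : Fin k → Z :=
  fun i => v i.castSucc

/-- The last `k` coordinates of a length-`k+1` tuple. -/
def back {Z : Type*} {k : ℕ} (v : Fin (k + 1) → Z) : Fin k → Z :=
  fun i => v i.succ

/-- `p` is a probability distribution on the finite type `α`. -/
def IsProbDist {α : Type*} [Fintype α] (p : α → ℝ) : Prop :=
  (∀ a, 0 ≤ p a) ∧ ∑ a, p a = 1

/-- `Q` is a `k`-th order Markov transition matrix on `Z`. -/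
def IsTransMat {Z : Type*} [Fintype Z] {k : ℕ} (Q : (Fin k → Z) → Z → ℝ) : Prop :=
  (∀ w z, 0 ≤ Q w z) ∧ ∀ w, ∑ z, Q w z = 1

/-- `μ` is an invariant (probability) distribution for the `k`-th order transition matrix `Q`:
`μ(z₁,…,z_k) = ∑_{z₀} μ(z₀,…,z_{k-1}) Q((z₀,…,z_{k-1}), z_k)`. -/
def IsInvariantFor {Z : Type*} [Fintype Z] {k : ℕ} (μ : (Fin k → Z) → ℝ)
    (Q : (Fin k → Z) → Z → ℝ) : Prop :=
  IsProbDist μ ∧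
    ∀ w : Fin k → Z,
      μ w = ∑ z0 : Z,
        μ (front (Fin.cons z0 w)) *
          Q (front (Fin.cons z0 w)) ((Fin.cons z0 w : Fin (k + 1) → Z) (Fin.last k))

/-- `P` is a (first-order) stochastic matrix. -/
def IsStochastic {S : Type*} [Fintype S] (P : Matrix S S ℝ) : Prop :=
  (∀ i j, 0 ≤ P i j) ∧ ∀ i, ∑ j, P i j = 1

/-- State `j` is accessible from state `i` under the stochastic matrix `P`. -/
def Accessible {S : Type*} [Fintype S] (P : Matrix S S ℝ) (i j : S) : Prop :=
  ∃ n : ℕ, 1 ≤ n ∧ 0 < (P ^ n) i j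

/-- State `i` is recurrent for the stochastic matrix `P`. -/
def Recurrent {S : Type*} [Fintype S] (P : Matrix S S ℝ) (i : S) : Prop :=
  ∀ j, Accessible P i j → Accessible P j i

/-- `P` has a single recurrent class. -/
def SingleRecurrentClass {S : Type*} [Fintype S] (P : Matrix S S ℝ) : Prop :=
  (∃ i, Recurrent P i) ∧ ∀ i j, Recurrent P i → Recurrent P j → Accessible P i j

/-- The Doob lift of a `k`-th order transition matrix `Q` on `Z` to a first-order
stochastic matrix on `Z^k`. -/
def doobLift {Z : Type*} {k : ℕ} (Q : (Fin k → Z) → Z → ℝ) (hk : 0 < k) :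
    Matrix (Fin k → Z) (Fin k → Z) ℝ :=
  Matrix.of fun w w' =>
    if ∀ (i : Fin k) (h : (i : ℕ) + 1 < k), w' i = w ⟨(i : ℕ) + 1, h⟩ then
      Q w (w' ⟨k - 1, Nat.sub_lt hk Nat.one_pos⟩)
    else 0

/-- The distribution of a length-`m` block of the process `g(X)`, where `X` is a
stationary Markov chain with transition matrix `P` and (initial) invariant
distribution `π`:
`p_m(y₁,…,y_m) = ∑_{x₁ ∈ g⁻¹(y₁),…,x_m ∈ g⁻¹(y_m)} π(x₁) ∏_{ℓ=2}^m P(x_{ℓ-1}, x_ℓ)`. -/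
def wordDist {X Y : Type*} [Fintype X] (P : Matrix X X ℝ) (π : X → ℝ) (g : X → Y)
    {m : ℕ} (y : Fin m → Y) : ℝ :=
  ∑ x : Fin m → X,
    if ∀ i, g (x i) = y i then
      ∏ i : Fin m,
        if (i : ℕ) = 0 then π (x i)
        else P (x ⟨(i : ℕ) - 1, lt_of_le_of_lt (Nat.sub_le _ _) i.isLt⟩) (x i)
    else 0

/-! ### Auxiliary lemmas -/

set_option linter.unusedSectionVars false

section generic
variable {S : Type*} [Fintype S]

lemma exists_pos_of_sum_pos {f : S → ℝ} (h : 0 < ∑ a, f a) : ∃ a, 0 < f a := by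
  by_contra hc
  push_neg at hc
  have : ∑ a, f a ≤ 0 := Finset.sum_nonpos (fun a _ => hc a)
  linarith

lemma pow_entry_nonneg (M : Matrix S S ℝ) (hM : ∀ i j, 0 ≤ M i j) :
    ∀ n i j, 0 ≤ (M ^ n) i j := by
  intro n
  induction n with
  | zero => intro i j; simp [Matrix.one_apply]; split <;> norm_num
  | succ n ih =>
      intro i j
      rw [pow_succ, Matrix.mul_apply]
      exact Finset.sum_nonneg fun l _ => mul_nonneg (ih i l) (hM l j)

lemma acc_of_pos {M : Matrix S S ℝ} {i j : S} (h : 0 < M i j) : Accessible M i j :=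
  ⟨1, le_refl 1, by simpa using h⟩

lemma acc_trans {M : Matrix S S ℝ} (hM : ∀ i j, 0 ≤ M i j) {i j l : S}
    (h1 : Accessible M i j) (h2 : Accessible M j l) : Accessible M i l := by
  obtain ⟨n, hn, hn'⟩ := h1
  obtain ⟨m, hm, hm'⟩ := h2
  refine ⟨n + m, by omega, ?_⟩
  rw [pow_add, Matrix.mul_apply]
  have hterm : 0 < (M ^ n) i j * (M ^ m) j l := mul_pos hn' hm'
  have : (M ^ n) i j * (M ^ m) j l ≤ ∑ a, (M ^ n) i a * (M ^ m) a l := by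
    apply Finset.single_le_sum (f := fun a => (M ^ n) i a * (M ^ m) a l)
      (fun a _ => mul_nonneg (pow_entry_nonneg M hM n i a) (pow_entry_nonneg M hM m a l))
      (Finset.mem_univ j)
  linarith

lemma pos_pair_of_mul_pos {a b : ℝ} (ha : 0 ≤ a) (hb : 0 ≤ b) (h : 0 < a * b) :
    0 < a ∧ 0 < b := by
  constructor
  · rcases ha.lt_or_eq with h' | h'
    · exact h'
    · exfalso; rw [← h'] at h; simp at h
  · rcases hb.lt_or_eq with h' | h'
    · exact h'
    · exfalso; rw [← h'] at h; simp at h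

lemma pathOfPow {M : Matrix S S ℝ} (hM : ∀ i j, 0 ≤ M i j) :
    ∀ (n : ℕ) (a b : S), 0 < (M ^ n) a b →
      ∃ u : ℕ → S, u 0 = a ∧ u n = b ∧ ∀ m < n, 0 < M (u m) (u (m + 1)) := by
  intro n
  induction n with
  | zero =>
      intro a b h
      have hab : a = b := by
        by_contra hne
        rw [pow_zero, Matrix.one_apply, if_neg hne] at h
        exact lt_irrefl 0 h
      exact ⟨fun _ => a, rfl, hab ▸ rfl, fun m hm => absurd hm (Nat.not_lt_zero m)⟩
  | succ n ih =>
      intro a b h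
      rw [pow_succ', Matrix.mul_apply] at h
      obtain ⟨c, hc⟩ := exists_pos_of_sum_pos h
      have hpair := pos_pair_of_mul_pos (hM a c) (pow_entry_nonneg M hM n c b) hc
      obtain ⟨u, hu0, hun, hstep⟩ := ih c b hpair.2
      refine ⟨fun m => if m = 0 then a else u (m - 1), rfl, ?_, ?_⟩
      · simp [hun]
      · intro m hm
        rcases Nat.eq_zero_or_pos m with hm0 | hm0
        · subst hm0; simpa [hu0] using hpair.1
        · have h1 : m ≠ 0 := by omega
          have h2 : m + 1 ≠ 0 := by omega
          simp only [if_neg h1, if_neg h2]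
          have : m + 1 - 1 = (m - 1) + 1 := by omega
          rw [this]
          exact hstep (m - 1) (by omega)
end generic

lemma snoc_apply {α : Type*} {n : ℕ} (w : Fin n → α) (z : α) (i : Fin (n + 1)) :
    (Fin.snoc w z : Fin (n + 1) → α) i = if h : (i : ℕ) < n then w ⟨i, h⟩ else z := by
  by_cases h : (i : ℕ) < n
  · have hi : i = Fin.castSucc ⟨i, h⟩ := Fin.ext rfl
    rw [hi]
    simp only [Fin.snoc_castSucc, Fin.coe_castSucc, dif_pos h]
  · have hi : i = Fin.last n := Fin.ext (by simp only [Fin.val_last]; have := i.isLt; omega)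
    rw [hi]
    simp only [Fin.snoc_last, Fin.val_last, dif_neg (lt_irrefl n)]

lemma factor_pos {ι : Type*} [Fintype ι] {f : ι → ℝ} (hnn : ∀ i, 0 ≤ f i)
    (h : 0 < ∏ i, f i) : ∀ i, 0 < f i := by
  intro i
  rcases (hnn i).lt_or_eq with h' | h'
  · exact h'
  · rw [Finset.prod_eq_zero (Finset.mem_univ i) h'.symm] at h
    exact absurd h (lt_irrefl 0)

section pi
variable {X : Type*} [Fintype X] (P : Matrix X X ℝ) (π : X → ℝ)
variable (hP0 : ∀ i j, 0 ≤ P i j) (hP1 : ∀ i, ∑ j, P i j = 1)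
  (hπ0 : ∀ i, 0 ≤ π i) (hπinv : ∀ j, ∑ i, π i * P i j = π j)

include hP0 hπ0 hπinv in
lemma pi_step {i j : X} (hi : 0 < π i) (hij : 0 < P i j) : 0 < π j := by
  have h : π i * P i j ≤ ∑ l, π l * P l j :=
    Finset.single_le_sum (f := fun l => π l * P l j)
      (fun l _ => mul_nonneg (hπ0 l) (hP0 l j)) (Finset.mem_univ i)
  rw [hπinv j] at h
  exact lt_of_lt_of_le (mul_pos hi hij) h

include hπinv in
lemma pi_pow : ∀ (n : ℕ) (j : X), ∑ i, π i * (P ^ n) i j = π j := by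
  intro n
  induction n with
  | zero => intro j; simp [Matrix.one_apply]
  | succ n ih =>
      intro j
      have : ∀ i, (P ^ (n+1)) i j = ∑ l, (P ^ n) i l * P l j := by
        intro i; rw [pow_succ, Matrix.mul_apply]
      simp_rw [this, Finset.mul_sum, ← mul_assoc]
      rw [Finset.sum_comm]
      simp_rw [← Finset.sum_mul, ih]
      exact hπinv j

include hP0 hπ0 hπinv in
lemma pi_pow_step {n : ℕ} {i j : X} (hi : 0 < π i) (hij : 0 < (P ^ n) i j) : 0 < π j := by
  have h : π i * (P ^ n) i j ≤ ∑ l, π l * (P ^ n) l j :=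
    Finset.single_le_sum (f := fun l => π l * (P ^ n) l j)
      (fun l _ => mul_nonneg (hπ0 l) (pow_entry_nonneg P hP0 n l j)) (Finset.mem_univ i)
  rw [pi_pow P π hπinv n j] at h
  exact lt_of_lt_of_le (mul_pos hi hij) h

include hP0 hP1 hπ0 hπinv in
lemma succ_acc (x : X) {z y : X} (hz : 0 < π z) (hzx : Accessible P z x)
    (hzy : 0 < P z y) : Accessible P y x := by
  classical
  set D : Finset X := Finset.univ.filter (fun y => ¬ Accessible P y x) with hD
  have hclosed : ∀ z' ∈ D, ∀ y', 0 < P z' y' → y' ∈ D := by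
    intro z' hz' y' hpos
    simp only [hD, Finset.mem_filter, Finset.mem_univ, true_and] at hz' ⊢
    intro hacc
    exact hz' (acc_trans hP0 (acc_of_pos hpos) hacc)
  have hrow : ∀ z' ∈ D, ∑ y' ∈ D, P z' y' = 1 := by
    intro z' hz'
    rw [← hP1 z']
    apply Finset.sum_subset (Finset.subset_univ D)
    intro y' _ hy'
    by_contra hne
    have : 0 < P z' y' := lt_of_le_of_ne (hP0 z' y') (Ne.symm hne)
    exact hy' (hclosed z' hz' y' this)
  have hsum : ∑ y' ∈ D, π y' = ∑ z', π z' * ∑ y' ∈ D, P z' y' := by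
    calc ∑ y' ∈ D, π y' = ∑ y' ∈ D, ∑ z', π z' * P z' y' :=
          Finset.sum_congr rfl (fun y' _ => (hπinv y').symm)
      _ = ∑ z', ∑ y' ∈ D, π z' * P z' y' := Finset.sum_comm
      _ = ∑ z', π z' * ∑ y' ∈ D, P z' y' := by simp [Finset.mul_sum]
  have hsplit : ∑ z', π z' * ∑ y' ∈ D, P z' y'
      = (∑ z' ∈ D, π z' * ∑ y' ∈ D, P z' y') + ∑ z' ∈ Dᶜ, π z' * ∑ y' ∈ D, P z' y' :=
    (Finset.sum_add_sum_compl D _).symm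
  have hDpart : ∑ z' ∈ D, π z' * ∑ y' ∈ D, P z' y' = ∑ z' ∈ D, π z' := by
    refine Finset.sum_congr rfl (fun z' hz' => ?_)
    rw [hrow z' hz', mul_one]
  have hzero : ∑ z' ∈ Dᶜ, π z' * ∑ y' ∈ D, P z' y' = 0 := by
    have := hsum
    rw [hsplit, hDpart] at this
    linarith
  have hzD : z ∈ Dᶜ := by
    simp only [hD, Finset.mem_compl, Finset.mem_filter, Finset.mem_univ, true_and, not_not]
    exact hzx
  have hterm : π z * ∑ y' ∈ D, P z y' = 0 := by
    have hnn : ∀ z' ∈ Dᶜ, 0 ≤ π z' * ∑ y' ∈ D, P z' y' :=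
      fun z' _ => mul_nonneg (hπ0 z') (Finset.sum_nonneg fun y' _ => hP0 z' y')
    exact (Finset.sum_eq_zero_iff_of_nonneg hnn).mp hzero z hzD
  have hrowz : ∑ y' ∈ D, P z y' = 0 := by
    rcases mul_eq_zero.mp hterm with h | h
    · exact absurd h (ne_of_gt hz)
    · exact h
  by_contra hyacc
  have hyD : y ∈ D := by
    simp only [hD, Finset.mem_filter, Finset.mem_univ, true_and]
    exact hyacc
  have : P z y = 0 :=
    (Finset.sum_eq_zero_iff_of_nonneg (fun y' _ => hP0 z y')).mp hrowz y hyD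
  rw [this] at hzy
  exact lt_irrefl 0 hzy

include hP0 hP1 hπ0 hπinv in
lemma pow_acc (x : X) : ∀ (n : ℕ) (z y : X), 0 < π z → Accessible P z x →
    0 < (P ^ n) z y → Accessible P y x := by
  intro n
  induction n with
  | zero =>
      intro z y hz hzx h
      have : z = y := by
        by_contra hne
        rw [pow_zero, Matrix.one_apply, if_neg hne] at h
        exact lt_irrefl 0 h
      exact this ▸ hzx
  | succ n ih =>
      intro z y hz hzx h
      rw [pow_succ, Matrix.mul_apply] at h
      obtain ⟨l, hl⟩ := exists_pos_of_sum_pos h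
      have hpair := pos_pair_of_mul_pos (pow_entry_nonneg P hP0 n z l) (hP0 l y) hl
      have hlacc : Accessible P l x := ih z l hz hzx hpair.1
      have hπl : 0 < π l := pi_pow_step P π hP0 hπ0 hπinv hz hpair.1
      exact succ_acc P π hP0 hP1 hπ0 hπinv x hπl hlacc hpair.2

include hP0 hP1 hπ0 hπinv in
lemma supp_recurrent {x : X} (hx : 0 < π x) : Recurrent P x := by
  have hpred : ∃ z, 0 < π z ∧ 0 < P z x := by
    have h : 0 < ∑ i, π i * P i x := by rw [hπinv x]; exact hx
    obtain ⟨z, hz⟩ := exists_pos_of_sum_pos h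
    exact ⟨z, pos_pair_of_mul_pos (hπ0 z) (hP0 z x) hz⟩
  obtain ⟨z, hπz, hPzx⟩ := hpred
  have hselfacc : Accessible P x x := by
    have : 0 < (P ^ 1) z x := by simpa using hPzx
    exact pow_acc P π hP0 hP1 hπ0 hπinv x 1 z x hπz (acc_of_pos hPzx) this
  intro j ⟨n, _, hn⟩
  exact pow_acc P π hP0 hP1 hπ0 hπinv x n x j hx hselfacc hn
end pi

section word
variable {X Y : Type*} [Fintype X] [Fintype Y]
variable (P : Matrix X X ℝ) (π : X → ℝ) (g : X → Y)
variable (hP0 : ∀ i j, 0 ≤ P i j) (hP1 : ∀ i, ∑ j, P i j = 1)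
  (hπ0 : ∀ i, 0 ≤ π i) (hπinv : ∀ j, ∑ i, π i * P i j = π j)

def IsTraj (t : ℕ → X) : Prop :=
  0 < π (t 0) ∧ ∀ m, 0 < P (t m) (t (m + 1))

include hP0 hπ0 in
lemma term_nonneg {m : ℕ} (y : Fin m → Y) (x : Fin m → X) :
    0 ≤ (if ∀ i, g (x i) = y i then
      ∏ i : Fin m,
        if (i : ℕ) = 0 then π (x i)
        else P (x ⟨(i : ℕ) - 1, lt_of_le_of_lt (Nat.sub_le _ _) i.isLt⟩) (x i)
    else 0) := by
  split
  · apply Finset.prod_nonneg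
    intro i _
    split
    · exact hπ0 _
    · exact hP0 _ _
  · exact le_refl 0

include hP0 hπ0 in
lemma word_nonneg {m : ℕ} (y : Fin m → Y) : 0 ≤ wordDist P π g y :=
  Finset.sum_nonneg fun x _ => term_nonneg P π g hP0 hπ0 y x

include hP0 hπ0 hπinv in
lemma traj_pi {t : ℕ → X} (ht : IsTraj P π t) : ∀ m, 0 < π (t m) := by
  intro m
  induction m with
  | zero => exact ht.1
  | succ m ih =>
      have h : π (t m) * P (t m) (t (m+1)) ≤ ∑ l, π l * P l (t (m+1)) :=
        Finset.single_le_sum (f := fun l => π l * P l (t (m+1)))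
          (fun l _ => mul_nonneg (hπ0 l) (hP0 l _)) (Finset.mem_univ (t m))
      rw [hπinv] at h
      exact lt_of_lt_of_le (mul_pos ih (ht.2 m)) h

include hP0 hπ0 hπinv in
lemma traj_word_pos {t : ℕ → X} (ht : IsTraj P π t) (n m : ℕ) :
    0 < wordDist P π g (fun i : Fin n => g (t (m + i))) := by
  rw [wordDist]
  apply Finset.sum_pos' (fun x _ => term_nonneg P π g hP0 hπ0 _ x)
  refine ⟨fun i : Fin n => t (m + i), Finset.mem_univ _, ?_⟩
  rw [if_pos (fun i => rfl)]
  apply Finset.prod_pos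
  intro i _
  by_cases h : (i : ℕ) = 0
  · rw [if_pos h]
    have he : m + (i : ℕ) = m := by omega
    show 0 < π (t (m + (i : ℕ)))
    rw [he]
    exact traj_pi P π hP0 hπ0 hπinv ht m
  · rw [if_neg h]
    show 0 < P (t (m + ((i : ℕ) - 1))) (t (m + (i : ℕ)))
    have h1 : m + (i : ℕ) = (m + ((i : ℕ) - 1)) + 1 := by omega
    rw [h1]
    exact ht.2 _

include hP1 in
lemma exists_succ (a : X) : ∃ b, 0 < P a b := by
  apply exists_pos_of_sum_pos
  rw [hP1 a]
  norm_num

include hP1 in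
lemma mk_traj {x0 : X} (hx0 : 0 < π x0) : ∃ t : ℕ → X, IsTraj P π t ∧ t 0 = x0 := by
  classical
  choose succ hsucc using exists_succ P hP1
  refine ⟨fun m => succ^[m] x0, ⟨by simpa using hx0, fun m => ?_⟩, rfl⟩
  show 0 < P (succ^[m] x0) (succ^[m + 1] x0)
  rw [Function.iterate_succ_apply']
  exact hsucc _

include hP0 hP1 hπ0 in
lemma word_pos_traj {n : ℕ} (hn : 0 < n) {y : Fin n → Y}
    (h : 0 < wordDist P π g y) :
    ∃ t : ℕ → X, IsTraj P π t ∧ ∀ i : Fin n, g (t i) = y i := by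
  classical
  rw [wordDist] at h
  obtain ⟨x, hx⟩ := exists_pos_of_sum_pos h
  by_cases hc : ∀ i, g (x i) = y i
  swap
  · rw [if_neg hc] at hx; exact absurd hx (lt_irrefl 0)
  rw [if_pos hc] at hx
  have hfac := factor_pos (f := fun i : Fin n =>
      if (i : ℕ) = 0 then π (x i)
      else P (x ⟨(i : ℕ) - 1, lt_of_le_of_lt (Nat.sub_le _ _) i.isLt⟩) (x i))
    (fun i => by
      split
      · exact hπ0 _
      · exact hP0 _ _) hx
  have hx0 : 0 < π (x ⟨0, hn⟩) := by
    have := hfac ⟨0, hn⟩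
    simpa using this
  have hstep : ∀ (j : ℕ) (hj : j + 1 < n), 0 < P (x ⟨j, by omega⟩) (x ⟨j + 1, hj⟩) := by
    intro j hj
    have hf := hfac ⟨j + 1, hj⟩
    dsimp only at hf
    rw [if_neg (by simp)] at hf
    simpa using hf
  choose succ hsucc using exists_succ P hP1
  refine ⟨fun m => if h : m < n then x ⟨m, h⟩ else succ^[m + 1 - n] (x ⟨n - 1, by omega⟩),
    ⟨?_, ?_⟩, ?_⟩
  · show 0 < π (if h : 0 < n then x ⟨0, h⟩ else _)
    rw [dif_pos hn]
    exact hx0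
  · intro m
    dsimp only
    by_cases h1 : m + 1 < n
    · rw [dif_pos (by omega : m < n), dif_pos h1]
      exact hstep m h1
    · by_cases h2 : m < n
      · rw [dif_pos h2, dif_neg (by omega : ¬ m + 1 < n)]
        have he : m + 1 + 1 - n = 1 := by omega
        rw [he, Function.iterate_one]
        have hxx : (⟨m, h2⟩ : Fin n) = ⟨n - 1, by omega⟩ := Fin.ext (by simp; omega)
        rw [hxx]
        exact hsucc _
      · rw [dif_neg h2, dif_neg (by omega : ¬ m + 1 < n)]
        have he : m + 1 + 1 - n = (m + 1 - n) + 1 := by omega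
        rw [he, Function.iterate_succ_apply']
        exact hsucc _
  · intro i
    dsimp only
    rw [dif_pos i.isLt]
    simpa using hc i

omit [Fintype X] in
lemma traj_glue {t s : ℕ → X} {N : ℕ} (hπt : 0 < π (t 0))
    (hsteps : ∀ m < N, 0 < P (t m) (t (m + 1))) (hs : IsTraj P π s)
    (hts : t N = s 0) :
    IsTraj P π (fun m => if m < N then t m else s (m - N)) := by
  constructor
  · by_cases h : 0 < N
    · simpa [h] using hπt
    · have hN : N = 0 := by omega
      subst hN
      simpa using hs.1
  · intro m
    dsimp only
    by_cases h1 : m + 1 < N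
    · rw [if_pos (by omega : m < N), if_pos h1]
      exact hsteps m (by omega)
    · by_cases h2 : m < N
      · have hm : m + 1 = N := by omega
        rw [if_pos h2, if_neg (by omega : ¬ m + 1 < N)]
        have h3 : m + 1 - N = 0 := by omega
        rw [h3, ← hts, ← hm]
        exact hsteps m (by omega)
      · rw [if_neg h2, if_neg (by omega : ¬ m + 1 < N)]
        have h3 : m + 1 - N = (m - N) + 1 := by omega
        rw [h3]
        exact hs.2 _
end word

/-! ### The Doob lift layer -/

section lift
variable {X Y : Type*} [Fintype X] [Fintype Y]
variable (P : Matrix X X ℝ) (π : X → ℝ) (g : X → Y)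
variable {k : ℕ} (hk : 0 < k) (Q : (Fin k → Y) → Y → ℝ)

/-- shifting a word one step, appending `z`. -/
def shiftW (w : Fin k → Y) (z : Y) : Fin k → Y :=
  fun i => if h : (i : ℕ) + 1 < k then w ⟨(i : ℕ) + 1, h⟩ else z

lemma shiftW_last (w : Fin k → Y) (z : Y) :
    shiftW w z ⟨k - 1, Nat.sub_lt hk Nat.one_pos⟩ = z := by
  show (if h : (k - 1) + 1 < k then w ⟨(k - 1) + 1, h⟩ else z) = z
  rw [dif_neg (by omega)]

lemma doob_shift (w : Fin k → Y) (z : Y) : doobLift Q hk w (shiftW w z) = Q w z := by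
  show (if ∀ (i : Fin k) (h : (i : ℕ) + 1 < k), shiftW w z i = w ⟨(i : ℕ) + 1, h⟩ then
      Q w (shiftW w z ⟨k - 1, Nat.sub_lt hk Nat.one_pos⟩) else 0) = Q w z
  have hcond : ∀ (i : Fin k) (h : (i : ℕ) + 1 < k), shiftW w z i = w ⟨(i : ℕ) + 1, h⟩ :=
    fun i h => dif_pos h
  rw [if_pos hcond, shiftW_last hk]

lemma doob_pos_elim {w v : Fin k → Y} (h : 0 < doobLift Q hk w v) :
    ∃ z, v = shiftW w z ∧ 0 < Q w z := by
  by_cases hcond : ∀ (i : Fin k) (h : (i : ℕ) + 1 < k), v i = w ⟨(i : ℕ) + 1, h⟩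
  · refine ⟨v ⟨k - 1, Nat.sub_lt hk Nat.one_pos⟩, ?_, ?_⟩
    · funext i
      show v i = if h : (i : ℕ) + 1 < k then w ⟨(i : ℕ) + 1, h⟩
        else v ⟨k - 1, Nat.sub_lt hk Nat.one_pos⟩
      by_cases hi : (i : ℕ) + 1 < k
      · rw [dif_pos hi]
        exact hcond i hi
      · rw [dif_neg hi]
        congr 1
        exact Fin.ext (by show (i : ℕ) = k - 1; have := i.isLt; omega)
    · have he : doobLift Q hk w v = Q w (v ⟨k - 1, Nat.sub_lt hk Nat.one_pos⟩) :=
        if_pos hcond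
      rwa [he] at h
  · have he : doobLift Q hk w v = 0 := if_neg hcond
    rw [he] at h
    exact absurd h (lt_irrefl 0)
end lift


section lift2
variable {X Y : Type*} [Fintype X] [Fintype Y]
variable (P : Matrix X X ℝ) (π : X → ℝ) (g : X → Y)
variable {k : ℕ} (hk : 0 < k) (Q : (Fin k → Y) → Y → ℝ)
variable (hP0 : ∀ i j, 0 ≤ P i j) (hP1 : ∀ i, ∑ j, P i j = 1)
  (hπ0 : ∀ i, 0 ≤ π i) (hπinv : ∀ j, ∑ i, π i * P i j = π j)
  (hYc : 0 < Fintype.card Y)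
  (hQ : ∀ (w : Fin k → Y) (z : Y), Q w z =
      if 0 < wordDist P π g w then wordDist P π g (Fin.snoc w z) / wordDist P π g w
      else 1 / (Fintype.card Y : ℝ))

lemma snoc_index (w : Fin k → Y) (z : Y) (j : ℕ) (hj : j < k + 1) :
    (Fin.snoc w z : Fin (k + 1) → Y) ⟨j, hj⟩ = if h : j < k then w ⟨j, h⟩ else z :=
  snoc_apply w z ⟨j, hj⟩

include hP0 hπ0 hQ hYc in
lemma Q_nonneg (w : Fin k → Y) (z : Y) : 0 ≤ Q w z := by
  rw [hQ]
  split
  · exact div_nonneg (word_nonneg P π g hP0 hπ0 _) (word_nonneg P π g hP0 hπ0 _)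
  · positivity

include hP0 hπ0 hQ hYc in
lemma doob_nonneg (w v : Fin k → Y) : 0 ≤ doobLift Q hk w v := by
  show 0 ≤ (if ∀ (i : Fin k) (h : (i : ℕ) + 1 < k), v i = w ⟨(i : ℕ) + 1, h⟩ then
      Q w (v ⟨k - 1, Nat.sub_lt hk Nat.one_pos⟩) else 0)
  split
  · exact Q_nonneg P π g Q hP0 hπ0 hYc hQ w _
  · exact le_refl 0

include hQ in
lemma Q_pos {w : Fin k → Y} {z : Y} (hw : 0 < wordDist P π g w)
    (hz : 0 < wordDist P π g (Fin.snoc w z)) : 0 < Q w z := by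
  rw [hQ, if_pos hw]
  exact div_pos hz hw

include hQ in
lemma Q_num_pos {w : Fin k → Y} {z : Y} (hw : 0 < wordDist P π g w)
    (h : 0 < Q w z) : 0 < wordDist P π g (Fin.snoc w z) := by
  rw [hQ, if_pos hw] at h
  have := mul_pos h hw
  rwa [div_mul_cancel₀ _ (ne_of_gt hw)] at this

include hQ hYc in
lemma Q_unif_pos {w : Fin k → Y} (hw : ¬ 0 < wordDist P π g w) (z : Y) : 0 < Q w z := by
  rw [hQ, if_neg hw]
  have : (0 : ℝ) < (Fintype.card Y : ℝ) := by exact_mod_cast hYc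
  positivity

include hP0 hπ0 hπinv hQ in
lemma lift_step {t : ℕ → X} (ht : IsTraj P π t) (m : ℕ) :
    0 < doobLift Q hk (fun i : Fin k => g (t (m + (i : ℕ))))
      (fun i : Fin k => g (t (m + 1 + (i : ℕ)))) := by
  have hW : (fun i : Fin k => g (t (m + 1 + (i : ℕ))))
      = shiftW (fun i : Fin k => g (t (m + (i : ℕ)))) (g (t (m + k))) := by
    funext i
    show g (t (m + 1 + (i : ℕ)))
      = if h : (i : ℕ) + 1 < k then g (t (m + ((i : ℕ) + 1))) else g (t (m + k))
    by_cases h : (i : ℕ) + 1 < k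
    · rw [dif_pos h]
      have e : m + 1 + (i : ℕ) = m + ((i : ℕ) + 1) := by omega
      rw [e]
    · rw [dif_neg h]
      have e : m + 1 + (i : ℕ) = m + k := by have := i.isLt; omega
      rw [e]
  rw [hW, doob_shift hk]
  apply Q_pos P π g Q hQ (traj_word_pos P π g hP0 hπ0 hπinv ht k m)
  have hsnoc : (Fin.snoc (fun i : Fin k => g (t (m + (i : ℕ)))) (g (t (m + k)))
      : Fin (k + 1) → Y) = fun i : Fin (k + 1) => g (t (m + (i : ℕ))) := by
    funext i
    rw [snoc_apply]
    by_cases h : (i : ℕ) < k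
    · rw [dif_pos h]
    · rw [dif_neg h]
      have e : m + k = m + (i : ℕ) := by have := i.isLt; omega
      rw [e]
  rw [hsnoc]
  exact traj_word_pos P π g hP0 hπ0 hπinv ht (k + 1) m

include hP0 hπ0 hπinv hYc hQ in
lemma traj_acc {t : ℕ → X} (ht : IsTraj P π t) (M a : ℕ) (hM : 1 ≤ M) :
    Accessible (doobLift Q hk) (fun i : Fin k => g (t (a + (i : ℕ))))
      (fun i : Fin k => g (t (a + M + (i : ℕ)))) := by
  induction M, hM using Nat.le_induction with
  | base => exact acc_of_pos (lift_step P π g hk Q hP0 hπ0 hπinv hQ ht a)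
  | succ M hM ih =>
      have h2 := acc_of_pos (lift_step P π g hk Q hP0 hπ0 hπinv hQ ht (a + M))
      have h3 := acc_trans (doob_nonneg P π g hk Q hP0 hπ0 hYc hQ) ih h2
      have he : a + M + 1 = a + (M + 1) := by omega
      rwa [he] at h3

include hP0 hπ0 hπinv in
lemma traj_glue' {t s : ℕ → X} {N : ℕ} (hπt : 0 < π (t 0))
    (hsteps : ∀ m < N, 0 < P (t m) (t (m + 1))) (hs : IsTraj P π s)
    (hts : t N = s 0) :
    ∃ T : ℕ → X, IsTraj P π T ∧ (∀ m, m < N → T m = t m) ∧ ∀ j, T (N + j) = s j := by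
  refine ⟨fun m => if m < N then t m else s (m - N),
    traj_glue P π hπt hsteps hs hts, fun m hm => if_pos hm, fun j => ?_⟩
  show (if N + j < N then t (N + j) else s (N + j - N)) = s j
  rw [if_neg (by omega)]
  congr 1
  omega

include hP0 hP1 hπ0 hπinv hYc hQ in
lemma comm_acc (hrec : SingleRecurrentClass P) {w w' : Fin k → Y}
    (hw : 0 < wordDist P π g w) (hw' : 0 < wordDist P π g w') :
    Accessible (doobLift Q hk) w w' := by
  obtain ⟨t1, ht1, hg1⟩ := word_pos_traj P π g hP0 hP1 hπ0 hk hw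
  obtain ⟨t2, ht2, hg2⟩ := word_pos_traj P π g hP0 hP1 hπ0 hk hw'
  have ha : 0 < π (t1 (k - 1)) := traj_pi P π hP0 hπ0 hπinv ht1 (k - 1)
  have hb : 0 < π (t2 0) := ht2.1
  have hacc : Accessible P (t1 (k - 1)) (t2 0) :=
    hrec.2 _ _ (supp_recurrent P π hP0 hP1 hπ0 hπinv ha)
      (supp_recurrent P π hP0 hP1 hπ0 hπinv hb)
  obtain ⟨n, hn1, hnpos⟩ := hacc
  obtain ⟨u, hu0, hun, hustep⟩ := pathOfPow hP0 n _ _ hnpos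
  obtain ⟨s, hstraj, hsu, hst2⟩ := traj_glue' P π hP0 hπ0 hπinv
    (t := u) (N := n) (s := t2) (by rw [hu0]; exact ha) hustep ht2 hun
  have hts : t1 (k - 1) = s 0 := by
    rw [hsu 0 (by omega), hu0]
  obtain ⟨T, hTtraj, hTt1, hTs⟩ := traj_glue' P π hP0 hπ0 hπinv
    (t := t1) (N := k - 1) (s := s) ht1.1 (fun m _ => ht1.2 m) hstraj hts
  have hW0 : (fun i : Fin k => g (T (0 + (i : ℕ)))) = w := by
    funext i
    rw [Nat.zero_add]
    by_cases hi : (i : ℕ) < k - 1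
    · rw [hTt1 _ hi]
      exact hg1 i
    · have he : (i : ℕ) = (k - 1) + 0 := by have := i.isLt; omega
      rw [he, hTs 0, ← hts]
      have he2 : k - 1 = (i : ℕ) := by omega
      rw [he2]
      exact hg1 i
  have hW1 : (fun i : Fin k => g (T (0 + (k - 1 + n) + (i : ℕ)))) = w' := by
    funext i
    have he : 0 + (k - 1 + n) + (i : ℕ) = (k - 1) + (n + (i : ℕ)) := by omega
    rw [he, hTs (n + (i : ℕ)), hst2 (i : ℕ)]
    exact hg2 i
  have hfin := traj_acc P π g hk Q hP0 hπ0 hπinv hYc hQ hTtraj (k - 1 + n) 0 (by omega)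
  rwa [hW0, hW1] at hfin

include hP0 hP1 hπ0 hπinv hQ in
lemma S_closed_step {w v : Fin k → Y} (hw : 0 < wordDist P π g w)
    (h : 0 < doobLift Q hk w v) : 0 < wordDist P π g v := by
  obtain ⟨z, hv, hQz⟩ := doob_pos_elim hk Q h
  have hnum : 0 < wordDist P π g (Fin.snoc w z) := Q_num_pos P π g Q hQ hw hQz
  obtain ⟨t, ht, hgt⟩ := word_pos_traj P π g hP0 hP1 hπ0 (by omega : 0 < k + 1) hnum
  have hv1 : v = fun i : Fin k => g (t (1 + (i : ℕ))) := by
    funext i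
    have hgi : g (t (1 + (i : ℕ)))
        = if h : 1 + (i : ℕ) < k then w ⟨1 + (i : ℕ), h⟩ else z :=
      (hgt ⟨1 + (i : ℕ), by have := i.isLt; omega⟩).trans (snoc_index w z _ _)
    rw [hv]
    show (if h : (i : ℕ) + 1 < k then w ⟨(i : ℕ) + 1, h⟩ else z) = g (t (1 + (i : ℕ)))
    rw [hgi]
    by_cases hik : (i : ℕ) + 1 < k
    · rw [dif_pos hik, dif_pos (by omega : 1 + (i : ℕ) < k)]
      congr 1
      exact Fin.ext (Nat.add_comm _ _)
    · rw [dif_neg hik, dif_neg (by omega : ¬ 1 + (i : ℕ) < k)]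
  rw [hv1]
  exact traj_word_pos P π g hP0 hπ0 hπinv ht k 1

include hP0 hP1 hπ0 hπinv hYc hQ in
lemma S_closed_acc {w v : Fin k → Y} (hw : 0 < wordDist P π g w)
    (hacc : Accessible (doobLift Q hk) w v) : 0 < wordDist P π g v := by
  obtain ⟨n, hn, hp⟩ := hacc
  obtain ⟨c, hc0, hcn, hcstep⟩ := pathOfPow (doob_nonneg P π g hk Q hP0 hπ0 hYc hQ) n w v hp
  have claim : ∀ m, m ≤ n → 0 < wordDist P π g (c m) := by
    intro m
    induction m with
    | zero => intro _; rw [hc0]; exact hw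
    | succ m ih =>
        intro hm
        exact S_closed_step P π g hk Q hP0 hP1 hπ0 hπinv hQ (ih (by omega))
          (hcstep m (by omega))
  have := claim n (le_refl n)
  rwa [hcn] at this

include hP0 hP1 hπ0 hπinv hYc hQ in
lemma escape {w : Fin k → Y} {u : Fin k → Y} (hu : 0 < wordDist P π g u)
    (hw : ¬ 0 < wordDist P π g w) :
    ∃ v, 0 < wordDist P π g v ∧ Accessible (doobLift Q hk) w v := by
  classical
  set vv : ℕ → Fin k → Y := fun j i =>
    if h : (i : ℕ) + j < k then w ⟨(i : ℕ) + j, h⟩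
    else u ⟨((i : ℕ) + j - k) % k, Nat.mod_lt _ hk⟩ with hvv
  have hv0 : vv 0 = w := by
    funext i
    show (if h : (i : ℕ) + 0 < k then w ⟨(i : ℕ) + 0, h⟩ else _) = w i
    rw [dif_pos (by have := i.isLt; omega : (i : ℕ) + 0 < k)]
    congr 1
  have hvk : vv k = u := by
    funext i
    show (if h : (i : ℕ) + k < k then w ⟨(i : ℕ) + k, h⟩
      else u ⟨((i : ℕ) + k - k) % k, Nat.mod_lt _ hk⟩) = u i
    rw [dif_neg (by omega : ¬ (i : ℕ) + k < k)]
    congr 1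
    apply Fin.ext
    show ((i : ℕ) + k - k) % k = (i : ℕ)
    rw [Nat.add_sub_cancel]
    exact Nat.mod_eq_of_lt i.isLt
  have hstep : ∀ (j : ℕ) (hj : j < k), vv (j + 1) = shiftW (vv j) (u ⟨j, hj⟩) := by
    intro j hj
    funext i
    show (if h : (i : ℕ) + (j + 1) < k then w ⟨(i : ℕ) + (j + 1), h⟩
        else u ⟨((i : ℕ) + (j + 1) - k) % k, Nat.mod_lt _ hk⟩)
      = if h : (i : ℕ) + 1 < k then vv j ⟨(i : ℕ) + 1, h⟩ else u ⟨j, hj⟩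
    by_cases h1 : (i : ℕ) + 1 < k
    · rw [dif_pos h1]
      show _ = (if h : ((i : ℕ) + 1) + j < k then w ⟨((i : ℕ) + 1) + j, h⟩
        else u ⟨(((i : ℕ) + 1) + j - k) % k, Nat.mod_lt _ hk⟩)
      by_cases h2 : (i : ℕ) + (j + 1) < k
      · rw [dif_pos h2, dif_pos (by omega : (i : ℕ) + 1 + j < k)]
        congr 1
        exact Fin.ext (show (i : ℕ) + (j + 1) = (i : ℕ) + 1 + j by omega)
      · rw [dif_neg h2, dif_neg (by omega : ¬ (i : ℕ) + 1 + j < k)]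
        congr 1
        apply Fin.ext
        show ((i : ℕ) + (j + 1) - k) % k = ((i : ℕ) + 1 + j - k) % k
        congr 1
        omega
    · rw [dif_neg h1, dif_neg (by omega : ¬ (i : ℕ) + (j + 1) < k)]
      congr 1
      apply Fin.ext
      show ((i : ℕ) + (j + 1) - k) % k = j
      have hik : (i : ℕ) = k - 1 := by have := i.isLt; omega
      have : (i : ℕ) + (j + 1) - k = j := by omega
      rw [this]
      exact Nat.mod_eq_of_lt hj
  have hstep_pos : ∀ (j : ℕ) (hj : j < k), ¬ 0 < wordDist P π g (vv j) →
      0 < doobLift Q hk (vv j) (vv (j + 1)) := by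
    intro j hj hnot
    rw [hstep j hj, doob_shift hk]
    exact Q_unif_pos P π g Q hYc hQ hnot _
  have claim : ∀ j, 1 ≤ j → j ≤ k → (∀ j' < j, ¬ 0 < wordDist P π g (vv j')) →
      Accessible (doobLift Q hk) w (vv j) := by
    intro j hj1
    induction j, hj1 using Nat.le_induction with
    | base =>
        intro _ hnone
        have h := hstep_pos 0 hk (hnone 0 (by omega))
        rw [hv0] at h
        exact acc_of_pos h
    | succ j hj ih =>
        intro hjk hnone
        have h1 := ih (by omega) (fun j' hj' => hnone j' (by omega))
        have h2 := acc_of_pos (hstep_pos j (by omega) (hnone j (by omega)))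
        exact acc_trans (doob_nonneg P π g hk Q hP0 hπ0 hYc hQ) h1 h2
  have hex : ∃ j, 1 ≤ j ∧ j ≤ k ∧ 0 < wordDist P π g (vv j) :=
    ⟨k, hk, le_refl k, hvk ▸ hu⟩
  let j0 := Nat.find hex
  have hj0 := Nat.find_spec hex
  have hnone : ∀ j' < j0, ¬ 0 < wordDist P π g (vv j') := by
    intro j' hj' hpos
    rcases Nat.eq_zero_or_pos j' with h0 | h0
    · rw [h0, hv0] at hpos
      exact hw hpos
    · exact Nat.find_min hex hj' ⟨h0, by omega, hpos⟩
  exact ⟨vv j0, hj0.2.2, claim j0 hj0.1 hj0.2.1 hnone⟩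
end lift2

/-- main theorem. With `Q` the `k`-th order Markov approximation of the
lumped process `g(X)` and `P_Q` its Doob lift on `Y^k`, `P_Q` has a single recurrent class,
namely `S = {w : p_k(w) > 0}`: every state of `S` is recurrent, all states of `S`
communicate, and every state outside `S` is transient. -/
theorem doob_lift_single_recurrent_class
    {X Y : Type*} [Fintype X] [Fintype Y]
    (P : Matrix X X ℝ) (hP : IsStochastic P) (hrec : SingleRecurrentClass P)
    (π : X → ℝ) (hπ : IsProbDist π) (hπinv : ∀ j, ∑ i, π i * P i j = π j)
    (hY : 1 < Fintype.card Y) (g : X → Y)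
    (k : ℕ) (hk : 1 ≤ k)
    (Q : (Fin k → Y) → Y → ℝ)
    (hQ : ∀ (w : Fin k → Y) (z : Y), Q w z =
      if 0 < wordDist P π g w then wordDist P π g (Fin.snoc w z) / wordDist P π g w
      else 1 / (Fintype.card Y : ℝ)) :
    SingleRecurrentClass (doobLift Q hk) ∧
    (∀ w : Fin k → Y, 0 < wordDist P π g w → Recurrent (doobLift Q hk) w) ∧
    (∀ w w' : Fin k → Y, 0 < wordDist P π g w → 0 < wordDist P π g w' →
      Accessible (doobLift Q hk) w w' ∧ Accessible (doobLift Q hk) w' w) ∧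
    ∀ w : Fin k → Y, ¬ 0 < wordDist P π g w → ¬ Recurrent (doobLift Q hk) w := by
  obtain ⟨hP0, hP1⟩ := hP
  obtain ⟨hπ0, hπ1⟩ := hπ
  have hYc : 0 < Fintype.card Y := by omega
  obtain ⟨x0, hx0⟩ : ∃ x0, 0 < π x0 := exists_pos_of_sum_pos (by rw [hπ1]; norm_num)
  obtain ⟨t, ht, -⟩ := mk_traj P π hP1 hx0
  have hu : 0 < wordDist P π g (fun i : Fin k => g (t (0 + (i : ℕ)))) :=
    traj_word_pos P π g hP0 hπ0 hπinv ht k 0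
  have hnotrec : ∀ w : Fin k → Y, ¬ 0 < wordDist P π g w →
      ¬ Recurrent (doobLift Q hk) w := by
    intro w hw hr
    obtain ⟨v, hv, hacc⟩ := escape P π g hk Q hP0 hP1 hπ0 hπinv hYc hQ hu hw
    exact hw (S_closed_acc P π g hk Q hP0 hP1 hπ0 hπinv hYc hQ hv (hr v hacc))
  have hrecS : ∀ w : Fin k → Y, 0 < wordDist P π g w →
      Recurrent (doobLift Q hk) w := by
    intro w hw v hacc
    have hv := S_closed_acc P π g hk Q hP0 hP1 hπ0 hπinv hYc hQ hw hacc
    exact comm_acc P π g hk Q hP0 hP1 hπ0 hπinv hYc hQ hrec hv hw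
  refine ⟨⟨⟨_, hrecS _ hu⟩, ?_⟩, hrecS,
    fun w w' h h' => ⟨comm_acc P π g hk Q hP0 hP1 hπ0 hπinv hYc hQ hrec h h',
      comm_acc P π g hk Q hP0 hP1 hπ0 hπinv hYc hQ hrec h' h⟩, hnotrec⟩
  intro i j hi hj
  by_cases hpi : 0 < wordDist P π g i
  · by_cases hpj : 0 < wordDist P π g j
    · exact comm_acc P π g hk Q hP0 hP1 hπ0 hπinv hYc hQ hrec hpi hpj
    · exact absurd hj (hnotrec j hpj)
  · exact absurd hi (hnotrec i hpi)
end
end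

section
/- There exist a finite set Z with |Z| = 4 and a second-order Markov transition matrix Q on Z (Q : Z^2 × Z → ℝ, nonnegative, rows summing to 1) such that: (i) Q is regular, i.e., there exists n ≥ 1 such that for all w ∈ Z^2 and all z ∈ Z, Σ_{w' ∈ Z^2 with second coordinate z} (((P_Q)^n)(w, w')) > 0, where P_Q is the Doob lift of Q on Z^2; and yet (ii) Q admits two distinct invariant distributions on Z^2; in particular, P_Q has more than one recurrent class. -/
open Finset
open scoped Classical

noncomputable section

/-!
Let `A` be the cycle `0 → 1 → 2 → 3 → 0` with a loop at `0` and `B` the reversed cycle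
`1 → 0 → 3 → 2 → 1` with a loop at `1`; they share no edge. Reading a pair `(a, b)` as an edge,
the chain in state `(a, b)` moves along a uniformly chosen edge of `A` out of `b` if `(a, b)` is an
edge of `A`, likewise for `B`, and otherwise jumps to a uniform letter. The edge sets of `A` and `B`
are then closed classes of the Doob lift, and since in both graphs every vertex has as many
incoming as outgoing edges, the uniform distributions on the two edge sets are both invariant.
The letter process does not see the split: from every pair some loop is reached, and from a loop
every letter is reachable at every sufficiently late time, so after six steps every letter is
possible.
-/

section UniformDist

variable {α : Type*} [DecidableEq α]

def uniformDist (s : Finset α) (a : α) : ℝ :=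
  if a ∈ s then (#s : ℝ)⁻¹ else 0

lemma uniformDist_of_mem {s : Finset α} {a : α} (h : a ∈ s) : uniformDist s a = (#s : ℝ)⁻¹ :=
  if_pos h

lemma uniformDist_of_notMem {s : Finset α} {a : α} (h : a ∉ s) : uniformDist s a = 0 :=
  if_neg h

lemma uniformDist_nonneg (s : Finset α) (a : α) : 0 ≤ uniformDist s a := by
  unfold uniformDist
  split_ifs <;> positivity

lemma uniformDist_pos_iff {s : Finset α} {a : α} : 0 < uniformDist s a ↔ a ∈ s := by
  unfold uniformDist
  split_ifs with h
  · simpa [h] using card_pos.mpr ⟨a, h⟩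
  · simp [h]

lemma uniformDist_ne {s t : Finset α} {a : α} (hs : a ∈ s) (ht : a ∉ t) :
    uniformDist s ≠ uniformDist t :=
  fun h => ht (uniformDist_pos_iff.mp (h ▸ uniformDist_pos_iff.mpr hs))

variable [Fintype α]

lemma isProbDist_uniformDist {s : Finset α} (hs : s.Nonempty) : IsProbDist (uniformDist s) := by
  refine ⟨uniformDist_nonneg s, ?_⟩
  have hcard : (#s : ℝ) ≠ 0 := by exact_mod_cast hs.card_pos.ne'
  simp only [uniformDist]
  rw [← sum_filter, filter_mem_eq_inter, univ_inter, sum_const, nsmul_eq_mul,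
    mul_inv_cancel₀ hcard]

lemma isTransMat_uniformDist {k : ℕ} {next : (Fin k → α) → Finset α}
    (hnext : ∀ w, (next w).Nonempty) : IsTransMat fun w => uniformDist (next w) :=
  ⟨fun w => uniformDist_nonneg (next w), fun w => (isProbDist_uniformDist (hnext w)).2⟩

end UniformDist

section NonnegMatrix

variable {S : Type*} [Fintype S] {P : Matrix S S ℝ}

lemma pow_apply_eq_zero_of_closed {C : Set S} (hC : ∀ i ∈ C, ∀ j ∉ C, P i j = 0) (n : ℕ)
    {i j : S} (hi : i ∈ C) (hj : j ∉ C) : (P ^ n) i j = 0 := by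
  induction n generalizing j with
  | zero => exact Matrix.one_apply_ne (show i ≠ j by rintro rfl; exact hj hi)
  | succ n ih =>
    rw [pow_succ, Matrix.mul_apply]
    refine sum_eq_zero fun l _ => ?_
    by_cases hl : l ∈ C
    · rw [hC l hl j hj, mul_zero]
    · rw [ih hl, zero_mul]

lemma not_accessible_of_closed {C : Set S} (hC : ∀ i ∈ C, ∀ j ∉ C, P i j = 0) {i j : S}
    (hi : i ∈ C) (hj : j ∉ C) : ¬ Accessible P i j := by
  rintro ⟨n, -, hpos⟩
  exact hpos.ne' (pow_apply_eq_zero_of_closed hC n hi hj)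

lemma recurrent_of_closed {C : Set S} (hC : ∀ i ∈ C, ∀ j ∉ C, P i j = 0) {i : S} (hi : i ∈ C)
    (hreturn : ∀ j ∈ C, Accessible P j i) : Recurrent P i :=
  fun j hij => hreturn j (by_contra fun hjC => not_accessible_of_closed hC hi hjC hij)

variable [DecidableEq S]

def reachIn (next : S → Finset S) : ℕ → S → Finset S
  | 0, i => {i}
  | n + 1, i => (reachIn next n i).biUnion next

lemma pow_apply_pos_iff_mem_reachIn {next : S → Finset S} (hP : ∀ i j, 0 ≤ P i j)
    (hnext : ∀ i j, 0 < P i j ↔ j ∈ next i) (n : ℕ) (i j : S) :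
    0 < (P ^ n) i j ↔ j ∈ reachIn next n i := by
  induction n generalizing j with
  | zero => by_cases h : i = j <;> simp [reachIn, h, eq_comm]
  | succ n ih =>
    rw [pow_succ, Matrix.mul_apply, sum_pos_iff_of_nonneg fun l _ =>
      mul_nonneg (Matrix.pow_apply_nonneg hP n i l) (hP l j)]
    simp only [reachIn, mem_biUnion, mem_univ, true_and, ← ih, ← hnext]
    refine exists_congr fun l => ⟨fun h => ?_, fun h => mul_pos h.1 h.2⟩
    exact (pos_and_pos_or_neg_and_neg_of_mul_pos h).resolve_right
      fun hneg => (Matrix.pow_apply_nonneg hP n i l).not_gt hneg.1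

lemma accessible_of_mem_reachIn {next : S → Finset S} (hP : ∀ i j, 0 ≤ P i j)
    (hnext : ∀ i j, 0 < P i j ↔ j ∈ next i) {n : ℕ} (hn : 1 ≤ n) {i j : S}
    (h : j ∈ reachIn next n i) : Accessible P i j :=
  ⟨n, hn, by convert (pow_apply_pos_iff_mem_reachIn hP hnext n i j).mpr h⟩

end NonnegMatrix

section SecondOrder

variable {Z : Type*}

lemma eq_vecCons_two (w : Fin 2 → Z) : w = ![w 0, w 1] := by
  funext i
  fin_cases i <;> rfl

lemma front_cons_two (z₀ : Z) (w : Fin 2 → Z) : front (Fin.cons z₀ w) = ![z₀, w 0] := by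
  funext i
  fin_cases i <;> rfl

lemma doobLift_two_apply (Q : (Fin 2 → Z) → Z → ℝ) (w w' : Fin 2 → Z) :
    doobLift Q Nat.zero_lt_two w w' = if w' 0 = w 1 then Q w (w' 1) else 0 := by
  have hshift : (∀ (i : Fin 2) (h : (i : ℕ) + 1 < 2), w' i = w ⟨(i : ℕ) + 1, h⟩) ↔
      w' 0 = w 1 := by
    refine ⟨fun h => h 0 Nat.one_lt_two, fun h i hi => ?_⟩
    obtain rfl : i = 0 := Fin.ext (by omega)
    exact h
  simp only [doobLift, Matrix.of_apply, hshift]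
  rfl

variable [Fintype Z] [DecidableEq Z]

def doobSucc (next : (Fin 2 → Z) → Finset Z) (w : Fin 2 → Z) : Finset (Fin 2 → Z) :=
  {w' | w' 0 = w 1 ∧ w' 1 ∈ next w}

lemma doobLift_pos_iff {Q : (Fin 2 → Z) → Z → ℝ} {next : (Fin 2 → Z) → Finset Z}
    (hQ : ∀ w z, 0 < Q w z ↔ z ∈ next w) (w w' : Fin 2 → Z) :
    0 < doobLift Q Nat.zero_lt_two w w' ↔ w' ∈ doobSucc next w := by
  rw [doobLift_two_apply, doobSucc, mem_filter]
  split_ifs with h <;> simp [h, hQ]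

omit [Fintype Z] in
lemma doobLift_nonneg {Q : (Fin 2 → Z) → Z → ℝ} (hQ : ∀ w z, 0 ≤ Q w z) (w w' : Fin 2 → Z) :
    0 ≤ doobLift Q Nat.zero_lt_two w w' := by
  rw [doobLift_two_apply]
  split_ifs
  exacts [hQ _ _, le_rfl]

/-- `E` is read as the edge set of a directed graph on `Z`, the edge `a → c` being `![a, c]`. -/
def outLetters (E : Finset (Fin 2 → Z)) (a : Z) : Finset Z := {c | ![a, c] ∈ E}

def inLetters (E : Finset (Fin 2 → Z)) (a : Z) : Finset Z := {z | ![z, a] ∈ E}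

variable {E : Finset (Fin 2 → Z)} {next : (Fin 2 → Z) → Finset Z}

lemma mem_edges_iff (w : Fin 2 → Z) : w ∈ E ↔ w 1 ∈ outLetters E (w 0) := by
  rw [outLetters, mem_filter, ← eq_vecCons_two]
  simp

lemma doobLift_uniformDist_eq_zero_of_mem_edges
    (hnext : ∀ w ∈ E, next w = outLetters E (w 1)) :
    ∀ w ∈ (E : Set (Fin 2 → Z)), ∀ w' ∉ (E : Set (Fin 2 → Z)),
      doobLift (fun v => uniformDist (next v)) Nat.zero_lt_two w w' = 0 := by
  intro w hw w' hw'
  rw [doobLift_two_apply]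
  split_ifs with hshift
  · rw [hnext w hw, uniformDist_of_notMem]
    rwa [mem_coe, mem_edges_iff, hshift] at hw'
  · rfl

/-- Each edge into `a` passes its mass `1 / #E` on equally to the edges out of `a`; balance makes
each of these receive `1 / #E` in total. -/
lemma isInvariantFor_uniformDist_edges (hE : E.Nonempty)
    (hnext : ∀ w ∈ E, next w = outLetters E (w 1))
    (hbalanced : ∀ a, #(inLetters E a) = #(outLetters E a)) :
    IsInvariantFor (uniformDist E) fun v => uniformDist (next v) := by
  refine ⟨isProbDist_uniformDist hE, fun w => ?_⟩
  have hlast (z₀ : Z) : (Fin.cons z₀ w : Fin 3 → Z) (Fin.last 2) = w 1 := rfl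
  simp only [front_cons_two, hlast]
  calc uniformDist E w
      = #(inLetters E (w 0)) * ((#E : ℝ)⁻¹ * uniformDist (outLetters E (w 0)) (w 1)) := by
        by_cases h : w 1 ∈ outLetters E (w 0)
        · have hcard : (#(outLetters E (w 0)) : ℝ) ≠ 0 := by
            exact_mod_cast (card_pos.mpr ⟨_, h⟩).ne'
          rw [uniformDist_of_mem ((mem_edges_iff w).mpr h), uniformDist_of_mem h, hbalanced]
          field_simp
        · rw [uniformDist_of_notMem (mt (mem_edges_iff w).mp h), uniformDist_of_notMem h,
            mul_zero, mul_zero]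
    _ = ∑ z₀ ∈ inLetters E (w 0), (#E : ℝ)⁻¹ * uniformDist (outLetters E (w 0)) (w 1) := by
        rw [sum_const, nsmul_eq_mul]
    _ = ∑ z₀, uniformDist E ![z₀, w 0] * uniformDist (next ![z₀, w 0]) (w 1) := by
        rw [inLetters, sum_filter]
        refine sum_congr rfl fun z₀ _ => ?_
        split_ifs with h
        · rw [uniformDist_of_mem h, hnext _ h]
          rfl
        · rw [uniformDist_of_notMem h, zero_mul]

end SecondOrder

section Example

def edgesA : Finset (Fin 2 → Fin 4) := {![0, 0], ![0, 1], ![1, 2], ![2, 3], ![3, 0]}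

def edgesB : Finset (Fin 2 → Fin 4) := {![1, 1], ![1, 0], ![0, 3], ![3, 2], ![2, 1]}

def nextLetters (w : Fin 2 → Fin 4) : Finset (Fin 4) :=
  if w ∈ edgesA then outLetters edgesA (w 1)
  else if w ∈ edgesB then outLetters edgesB (w 1)
  else univ

def exampleQ (w : Fin 2 → Fin 4) : Fin 4 → ℝ := uniformDist (nextLetters w)

lemma isTransMat_exampleQ : IsTransMat exampleQ :=
  isTransMat_uniformDist (by decide)

lemma doobLift_exampleQ_nonneg (w w' : Fin 2 → Fin 4) :
    0 ≤ doobLift exampleQ Nat.zero_lt_two w w' :=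
  doobLift_nonneg (fun v => uniformDist_nonneg (nextLetters v)) w w'

lemma doobLift_exampleQ_pos_iff (w w' : Fin 2 → Fin 4) :
    0 < doobLift exampleQ Nat.zero_lt_two w w' ↔ w' ∈ doobSucc nextLetters w :=
  doobLift_pos_iff (fun _ _ => uniformDist_pos_iff) w w'

lemma nextLetters_of_mem_edgesA : ∀ w ∈ edgesA, nextLetters w = outLetters edgesA (w 1) :=
  fun _ hw => if_pos hw

lemma nextLetters_of_mem_edgesB : ∀ w ∈ edgesB, nextLetters w = outLetters edgesB (w 1) :=
  fun w hw => (if_neg (by revert w; decide)).trans (if_pos hw)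

lemma isInvariantFor_uniformDist_edgesA : IsInvariantFor (uniformDist edgesA) exampleQ :=
  isInvariantFor_uniformDist_edges (by decide) nextLetters_of_mem_edgesA (by decide)

lemma isInvariantFor_uniformDist_edgesB : IsInvariantFor (uniformDist edgesB) exampleQ :=
  isInvariantFor_uniformDist_edges (by decide) nextLetters_of_mem_edgesB (by decide)

lemma recurrent_of_mem_edges {E : Finset (Fin 2 → Fin 4)}
    (hnext : ∀ w ∈ E, nextLetters w = outLetters E (w 1)) {w : Fin 2 → Fin 4} (hw : w ∈ E)
    (hreturn : ∀ v ∈ E, ∃ n ∈ Icc 1 4, w ∈ reachIn (doobSucc nextLetters) n v) :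
    Recurrent (doobLift exampleQ Nat.zero_lt_two) w := by
  refine recurrent_of_closed (doobLift_uniformDist_eq_zero_of_mem_edges hnext) hw fun v hv => ?_
  obtain ⟨n, hn, hreach⟩ := hreturn v hv
  exact accessible_of_mem_reachIn doobLift_exampleQ_nonneg doobLift_exampleQ_pos_iff
    (mem_Icc.mp hn).1 hreach

lemma exampleQ_regular (w : Fin 2 → Fin 4) (z : Fin 4) :
    0 < ∑ w' : Fin 2 → Fin 4,
      (if w' 1 = z then ((doobLift exampleQ Nat.zero_lt_two) ^ 6) w w' else 0) := by
  obtain ⟨w', hreach, hz⟩ : ∃ w' ∈ reachIn (doobSucc nextLetters) 6 w, w' 1 = z := by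
    revert w z
    decide
  refine sum_pos' (fun v _ => ?_) ⟨w', mem_univ w', ?_⟩
  · split_ifs
    exacts [Matrix.pow_apply_nonneg doobLift_exampleQ_nonneg 6 w v, le_rfl]
  · rw [if_pos hz]
    exact (pow_apply_pos_iff_mem_reachIn doobLift_exampleQ_nonneg doobLift_exampleQ_pos_iff
      6 w w').mpr hreach

end Example

/-- Example 1. There is a regular second-order Markov transition matrix
`Q` on a four-element alphabet whose Doob lift nevertheless has more than one recurrent
class; in particular `Q` admits two distinct invariant distributions on `Z^2`. -/
theorem regular_second_order_chain_without_unique_invariant :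
    ∃ Q : (Fin 2 → Fin 4) → Fin 4 → ℝ, IsTransMat Q ∧
      (∃ n : ℕ, 1 ≤ n ∧ ∀ (w : Fin 2 → Fin 4) (z : Fin 4),
        0 < ∑ w' : Fin 2 → Fin 4,
          (if w' 1 = z then ((doobLift Q Nat.zero_lt_two) ^ n) w w' else 0)) ∧
      (∃ μ₁ μ₂ : (Fin 2 → Fin 4) → ℝ, μ₁ ≠ μ₂ ∧
        IsInvariantFor μ₁ Q ∧ IsInvariantFor μ₂ Q) ∧
      ∃ w w' : Fin 2 → Fin 4, Recurrent (doobLift Q Nat.zero_lt_two) w ∧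
        Recurrent (doobLift Q Nat.zero_lt_two) w' ∧
        ¬ Accessible (doobLift Q Nat.zero_lt_two) w w' := by
  have h00 : ![0, 0] ∈ edgesA := by decide
  have h11 : ![1, 1] ∈ edgesB := by decide
  refine ⟨exampleQ, isTransMat_exampleQ, ⟨6, by norm_num, exampleQ_regular⟩,
    ⟨_, _, uniformDist_ne h00 (by decide), isInvariantFor_uniformDist_edgesA,
      isInvariantFor_uniformDist_edgesB⟩,
    ![0, 0], ![1, 1],
    recurrent_of_mem_edges nextLetters_of_mem_edgesA h00 (by decide),
    recurrent_of_mem_edges nextLetters_of_mem_edgesB h11 (by decide),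
    not_accessible_of_closed (doobLift_uniformDist_eq_zero_of_mem_edges nextLetters_of_mem_edgesA)
      h00 (by decide)⟩
end
end
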